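/- For every k ≥ 0, the finite continued fraction values coincide: [0; v_k] = [0; ṽ_k], i.e. p(v_k)/q(v_k) = p(ṽ_k)/q(ṽ_k). -/

import Mathlib

open Complex MeasureTheory Filter Set
open scoped ENNReal

noncomputable section

/-- The fundamental domain `𝔇 = {x+iy : x,y ∈ [-1/2,1/2)}`. -/
def fund : Set ℂ := {z : ℂ | z.re ∈ Set.Ico (-(1:ℝ)/2) (1/2) ∧ z.im ∈ Set.Ico (-(1:ℝ)/2) (1/2)}

/-- `𝔇* = 𝔇 \ {0}`. -/
def fundStar : Set ℂ := fund \ {0}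

/-- Nearest Gaussian integer `[z]`, the unique Gaussian integer with `z - [z] ∈ 𝔇`. -/
def nearestGauss (z : ℂ) : ℂ :=
  ((⌊z.re + 1/2⌋ : ℤ) : ℂ) + ((⌊z.im + 1/2⌋ : ℤ) : ℂ) * Complex.I

/-- The Hurwitz map `T(z) = 1/z - [1/z]` (with `T 0 = 0`). -/
def hT (z : ℂ) : ℂ := 1/z - nearestGauss (1/z)

/-- HCF partial quotient `a_{n+1}(z) = [1 / T^n(z)]` (0-based index). -/
def hA (z : ℂ) (n : ℕ) : ℂ := nearestGauss (1 / (hT^[n] z))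

/-- `z` is a Gaussian integer. -/
def IsGaussInt (z : ℂ) : Prop := ∃ a b : ℤ, z = (a : ℂ) + (b : ℂ) * Complex.I

/-- The set `I = {a ∈ ℤ[i] : |a| ≥ √2}` of possible partial quotients. -/
def setI : Set ℂ := {a : ℂ | IsGaussInt a ∧ Real.sqrt 2 ≤ ‖a‖}

/-- The matrix `((p(u), p(u⁻)), (q(u), q(u⁻))) = ((0,1),(1,0)) * ∏ ((u_j,1),(1,0))`. -/
def cfMatrix (u : List ℂ) : Matrix (Fin 2) (Fin 2) ℂ :=
  !![0, 1; 1, 0] * (u.map fun a => !![a, 1; 1, 0]).prod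

/-- Continuant numerator `p(u)`. -/
def contP (u : List ℂ) : ℂ := cfMatrix u 0 0

/-- Continuant denominator `q(u)`. -/
def contQ (u : List ℂ) : ℂ := cfMatrix u 1 0

/-- The cylinder `C(u) = {z ∈ 𝔇 : a_1(z) = u_1, …, a_n(z) = u_n}`. -/
def cylinder (u : List ℂ) : Set ℂ :=
  {z ∈ fund | ∀ j : Fin u.length, hA z j = u.get j}

/-- The prototype set `𝔇_u = T^n(C(u))`. -/
def proto (u : List ℂ) : Set ℂ := hT^[u.length] '' cylinder u

/-- The Möbius transformation `T_u : z ↦ (p(u⁻) z + p(u)) / (q(u⁻) z + q(u))`. -/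
def moebiusT (u : List ℂ) (z : ℂ) : ℂ :=
  (cfMatrix u 0 1 * z + cfMatrix u 0 0) / (cfMatrix u 1 1 * z + cfMatrix u 1 0)

/-- `u` is full if `𝔇_u = 𝔇`. -/
def FullSeq (u : List ℂ) : Prop := proto u = fund

/-- `u` is regular if `𝔇_u` has nonempty interior. -/
def RegularSeq (u : List ℂ) : Prop := (interior (proto u)).Nonempty

/-- The length of the (finite) HCF expansion of a Gaussian rational `w ∈ 𝔇*`:
the least `N` with `T^N(w) = 0`. -/
def hcfLength (w : ℂ) : ℕ := sInf {N : ℕ | hT^[N] w = 0}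

/-- `dd(z, w)`: the number of indices `1 ≤ n ≤ N` where the HCF partial quotients of `z`
and of the Gaussian rational `w` (with expansion of length `N`) differ. -/
def ddiff (z w : ℂ) : ℕ := {n : ℕ | n < hcfLength w ∧ hA z n ≠ hA w n}.ncard

/-- The sequence `v_k = (3, -2i)` followed by `k` repetitions of `(-2, 2i, -2, -2i)`. -/
def vSeq (k : ℕ) : List ℂ :=
  [3, -2*Complex.I] ++ (List.replicate k [-2, 2*Complex.I, -2, -2*Complex.I]).flatten

/-- The sequence `ṽ_k = (3+i, 2i)` followed by `k` repetitions of `(-2+i, 2i, -2+i, 2i)`. -/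
def vtSeq (k : ℕ) : List ℂ :=
  [3+Complex.I, 2*Complex.I] ++
    (List.replicate k [-2+Complex.I, 2*Complex.I, -2+Complex.I, 2*Complex.I]).flatten

/-- The lower order `λ(ψ) = liminf_{x→∞} (-log ψ(x)) / log x`, valued in `ℝ≥0∞`. -/
def lambdaPsi (ψ : ℝ → ℝ) : ℝ≥0∞ :=
  Filter.liminf (fun x : ℝ => ENNReal.ofReal (-Real.log (ψ x) / Real.log x)) Filter.atTop

/-- The set `E(ψ)` of `z ∈ 𝔇*` admitting infinitely many Gaussian rational approximations
`p/q` with `|z - p/q| ≤ ψ(|q|)` whose HCF expansions differ from that of `z` in more and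
more places. -/
def Epsi (ψ : ℝ → ℝ) : Set ℂ :=
  {z : ℂ | z ∈ fundStar ∧ ∃ p q : ℕ → ℂ,
    (∀ n, IsGaussInt (p n) ∧ IsGaussInt (q n) ∧ q n ≠ 0 ∧
      ‖z - p n / q n‖ ≤ ψ (‖q n‖)) ∧
    Function.Injective (fun n => p n / q n) ∧
    Filter.Tendsto (fun n => ddiff z (p n / q n)) Filter.atTop Filter.atTop}

/-- The `ψ`-approximable set `W(ψ)`. -/
def Wpsi (ψ : ℝ → ℝ) : Set ℂ :=
  {z : ℂ | z ∈ fundStar ∧ {pq : ℂ × ℂ | IsGaussInt pq.1 ∧ IsGaussInt pq.2 ∧ pq.2 ≠ 0 ∧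
    ‖z - pq.1 / pq.2‖ ≤ ψ (‖pq.2‖)}.Infinite}

end

/-!
Write `M(u) = ∏ !![u_j, 1; 1, 0]` and `S = !![1, -i; 0, 1]`. A direct computation gives
`M(3+i, 2i) = -M(3, -2i) S` and `S B̃ = -B S` for the repeated blocks `B` of `v_k` and `B̃` of
`ṽ_k`, so by induction `cfMatrix ṽ_k = (-1)^(k+1) cfMatrix v_k S`. Right multiplication by `S`
fixes the first column `(p, q)`, and a nonzero scalar does not change the ratio `p / q`.
-/

open Matrix

lemma mul_shear_apply_zero {R : Type*} [Semiring R] (M : Matrix (Fin 2) (Fin 2) R) (b : R)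
    (i : Fin 2) : (M * !![1, b; 0, 1]) i 0 = M i 0 := by
  simp [mul_apply, Fin.sum_univ_two]

lemma contP_div_contQ_eq_of_cfMatrix_eq_smul_mul_shear {u w : List ℂ} {c b : ℂ} (hc : c ≠ 0)
    (h : cfMatrix w = c • (cfMatrix u * !![1, b; 0, 1])) :
    contP w / contQ w = contP u / contQ u := by
  simp only [contP, contQ, h, Matrix.smul_apply, mul_shear_apply_zero, smul_eq_mul]
  exact mul_div_mul_left _ _ hc

lemma cfMatrix_append (u w : List ℂ) :
    cfMatrix (u ++ w) = cfMatrix u * (w.map fun a => !![a, 1; 1, 0]).prod := by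
  simp only [cfMatrix, List.map_append, List.prod_append, Matrix.mul_assoc]

lemma vSeq_succ (k : ℕ) : vSeq (k + 1) = vSeq k ++ [-2, 2 * I, -2, -2 * I] := by
  simp [vSeq, List.replicate_succ']

lemma vtSeq_succ (k : ℕ) : vtSeq (k + 1) = vtSeq k ++ [-2 + I, 2 * I, -2 + I, 2 * I] := by
  simp [vtSeq, List.replicate_succ']

lemma cfMatrix_vtSeq_zero : cfMatrix (vtSeq 0) = -(cfMatrix (vSeq 0) * !![1, -I; 0, 1]) := by
  simp only [vSeq, vtSeq, List.replicate_zero, List.flatten_nil, List.append_nil, cfMatrix,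
    List.map_cons, List.map_nil, List.prod_cons, List.prod_nil, Matrix.mul_one, mul_fin_two]
  ext i j
  fin_cases i <;> fin_cases j <;> simp <;> ring_nf <;> simp [I_sq] <;> ring

lemma shear_mul_vtBlock :
    !![1, -I; 0, 1] * ([-2 + I, 2 * I, -2 + I, 2 * I].map fun a => !![a, 1; 1, 0]).prod =
      -(([-2, 2 * I, -2, -2 * I].map fun a => !![a, 1; 1, 0]).prod * !![1, -I; 0, 1]) := by
  simp only [List.map_cons, List.map_nil, List.prod_cons, List.prod_nil, Matrix.mul_one,
    mul_fin_two, neg_of]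
  congr 1
  ext i j
  fin_cases i <;> fin_cases j <;> simp <;> ring_nf <;> simp [I_sq] <;> ring

lemma cfMatrix_vtSeq (k : ℕ) :
    cfMatrix (vtSeq k) = (-1 : ℂ) ^ (k + 1) • (cfMatrix (vSeq k) * !![1, -I; 0, 1]) := by
  induction k with
  | zero => simpa using cfMatrix_vtSeq_zero
  | succ k ih =>
    rw [vSeq_succ, vtSeq_succ, cfMatrix_append, cfMatrix_append, ih, Matrix.smul_mul,
      Matrix.mul_assoc, shear_mul_vtBlock, Matrix.mul_neg, ← Matrix.mul_assoc,
      pow_succ _ (k + 1), mul_neg_one, neg_smul, smul_neg]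

theorem vSeq_value_eq_vtSeq_value (k : ℕ) :
    contP (vSeq k) / contQ (vSeq k) = contP (vtSeq k) / contQ (vtSeq k) :=
  (contP_div_contQ_eq_of_cfMatrix_eq_smul_mul_shear (pow_ne_zero _ (by norm_num))
    (cfMatrix_vtSeq k)).symm
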